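/- arXiv:1702.00622 — 4 statements merged into one kernel-verified Lean document; each statement's English description precedes it below -/
import Mathlib

section
/- Let G be an imperfect (P4 ∪ K1, C4)-free graph. Then G is connected and there exists a partition (V1, V2, V3) of the vertex set of G such that V1 induces a P4-free subgraph of G, and V2 and V3 are cliques of G. -/
open SimpleGraph

/-- `G` contains no induced subgraph isomorphic to `H` (graph embeddings are
exactly the inclusions of induced subgraphs). -/
def IndFree {W V : Type*} (H : SimpleGraph W) (G : SimpleGraph V) : Prop :=
  IsEmpty (H ↪g G)

/-- A set of vertices is independent if its elements are pairwise nonadjacent. -/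
def IsIndep {V : Type*} (G : SimpleGraph V) (s : Set V) : Prop :=
  s.Pairwise fun u v => ¬ G.Adj u v

/-- A graph is perfect if every induced subgraph has chromatic number equal to
its clique number. -/
def IsPerfect {V : Type*} (G : SimpleGraph V) : Prop :=
  ∀ S : Set V, (G.induce S).chromaticNumber = ((G.induce S).cliqueNum : ℕ∞)

/-- `2K₂`: two disjoint edges `{0,1}` and `{2,3}`. -/
def graph2K2 : SimpleGraph (Fin 4) :=
  SimpleGraph.fromRel (fun a b => (a = 0 ∧ b = 1) ∨ (a = 2 ∧ b = 3))

/-- The path `P₄`. -/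
def graphP4 : SimpleGraph (Fin 4) :=
  SimpleGraph.fromRel (fun a b => (a = 0 ∧ b = 1) ∨ (a = 1 ∧ b = 2) ∨ (a = 2 ∧ b = 3))

/-- The path `P₃`. -/
def graphP3 : SimpleGraph (Fin 3) :=
  SimpleGraph.fromRel (fun a b => (a = 0 ∧ b = 1) ∨ (a = 1 ∧ b = 2))

/-- `P₄ ∪ K₁`: a path on `{0,1,2,3}` plus the isolated vertex `4`. -/
def graphP4K1 : SimpleGraph (Fin 5) :=
  SimpleGraph.fromRel (fun a b => (a = 0 ∧ b = 1) ∨ (a = 1 ∧ b = 2) ∨ (a = 2 ∧ b = 3))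

/-- The cycle `C₄`. -/
def graphC4 : SimpleGraph (Fin 4) :=
  SimpleGraph.fromRel
    (fun a b => (a = 0 ∧ b = 1) ∨ (a = 1 ∧ b = 2) ∨ (a = 2 ∧ b = 3) ∨ (a = 3 ∧ b = 0))

/-- The gem `K₁ + P₄`: a path on `{0,1,2,3}` plus the universal vertex `4`. -/
def graphGem : SimpleGraph (Fin 5) :=
  SimpleGraph.fromRel
    (fun a b => (a = 0 ∧ b = 1) ∨ (a = 1 ∧ b = 2) ∨ (a = 2 ∧ b = 3) ∨ (a ≠ 4 ∧ b = 4))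

/-- The wheel `K₁ + C₄`: a 4-cycle on `{0,1,2,3}` plus the universal vertex `4`. -/
def graphWheel : SimpleGraph (Fin 5) :=
  SimpleGraph.fromRel
    (fun a b => (a = 0 ∧ b = 1) ∨ (a = 1 ∧ b = 2) ∨ (a = 2 ∧ b = 3) ∨ (a = 3 ∧ b = 0) ∨
      (a ≠ 4 ∧ b = 4))

/-- `P₂ ∪ P₃`: the edge `{0,1}` together with the path `2 - 3 - 4`. -/
def graphP2P3 : SimpleGraph (Fin 5) :=
  SimpleGraph.fromRel (fun a b => (a = 0 ∧ b = 1) ∨ (a = 2 ∧ b = 3) ∨ (a = 3 ∧ b = 4))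

/-- `P₂ ∪ P₄`: the edge `{0,1}` together with the path `2 - 3 - 4 - 5`. -/
def graphP2P4 : SimpleGraph (Fin 6) :=
  SimpleGraph.fromRel
    (fun a b => (a = 0 ∧ b = 1) ∨ (a = 2 ∧ b = 3) ∨ (a = 3 ∧ b = 4) ∨ (a = 4 ∧ b = 5))

/-- `HVN`: `K₄` on `{0,1,2,3}` plus a vertex `4` adjacent to exactly `0` and `1`. -/
def graphHVN : SimpleGraph (Fin 5) :=
  SimpleGraph.fromRel (fun a b => (a < 4 ∧ b < 4) ∨ (a = 4 ∧ (b = 0 ∨ b = 1)))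

/-- `K₅ - e`: the complete graph on 5 vertices minus the edge `{0,1}`. -/
def graphK5e : SimpleGraph (Fin 5) :=
  SimpleGraph.fromRel (fun a b => ¬((a = 0 ∧ b = 1) ∨ (a = 1 ∧ b = 0)))

/-- The diamond `K₄ - e`: the complete graph on 4 vertices minus the edge `{0,2}`. -/
def graphDiamond : SimpleGraph (Fin 4) :=
  SimpleGraph.fromRel (fun a b => ¬((a = 0 ∧ b = 2) ∨ (a = 2 ∧ b = 0)))

/-- The paw: a triangle `{0,1,2}` plus a pendant vertex `3` adjacent to `0`. -/
def graphPaw : SimpleGraph (Fin 4) :=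
  SimpleGraph.fromRel
    (fun a b => (a = 0 ∧ b = 1) ∨ (a = 1 ∧ b = 2) ∨ (a = 0 ∧ b = 2) ∨ (a = 0 ∧ b = 3))

/-- `K₅`. -/
def graphK5 : SimpleGraph (Fin 5) := ⊤

/-- The join `K₁ + H`: `H` together with a new universal vertex `none`. -/
def joinK1 {W : Type*} (H : SimpleGraph W) : SimpleGraph (Option W) :=
  SimpleGraph.fromRel
    (fun a b => (∃ u v, a = some u ∧ b = some v ∧ H.Adj u v) ∨ a = none)

/-- A pseudo-split graph is a `(2K₂, C₄)`-free graph. -/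
def IsPseudoSplit {V : Type*} (G : SimpleGraph V) : Prop :=
  IndFree graph2K2 G ∧ IndFree graphC4 G

/-!
`(P₄, C₄)`-free graphs are perfect: if `x` has maximum degree, no edge `s - t` leaves `N[x]`,
since otherwise `P₄`- and `C₄`-freeness would give `(N(x) ∖ {s}) ∪ {x, t} ⊆ N(s)`. So either
`x` is universal and `G - x` is coloured first, or `G` splits along `N[x]`; induct on `|V|`.

An imperfect `G` therefore contains an induced `P₄`; let `z` be an endpoint of one, of least
degree among all such endpoints. As `G` is `P₄ ∪ K₁`-free, every induced `P₄` dominates `G`, so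
`G` is connected and the non-neighbours of `z` induce a `P₄`-free graph. A vertex `t ∈ N(z)`
with a non-neighbour in `N(z)` has a neighbour outside `N[z]`, for otherwise `t` would be a
`P₄`-endpoint of smaller degree. With `C₄`-freeness, these outer neighbours rule out independent
triples and induced `C₅`s in `N(z)`, which makes `N(z)` the union of two cliques; `z` joins one.
-/

section

variable {V : Type*} {G : SimpleGraph V} {a b c d e s t u v w x y z : V}

-- Distinctness of the vertices is not required: it follows from the (non-)adjacencies.
def IsInducedP4 (G : SimpleGraph V) (a b c d : V) : Prop :=
  G.Adj a b ∧ G.Adj b c ∧ G.Adj c d ∧ ¬G.Adj a c ∧ ¬G.Adj a d ∧ ¬G.Adj b d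

def IsInducedC5 (G : SimpleGraph V) (a b c d e : V) : Prop :=
  G.Adj a b ∧ G.Adj b c ∧ G.Adj c d ∧ G.Adj d e ∧ G.Adj e a ∧
    ¬G.Adj a c ∧ ¬G.Adj a d ∧ ¬G.Adj b d ∧ ¬G.Adj b e ∧ ¬G.Adj c e

theorem IsInducedC5.rotate (h : IsInducedC5 G a b c d e) : IsInducedC5 G b c d e a :=
  let ⟨hab, hbc, hcd, hde, hea, hac, had, hbd, hbe, hce⟩ := h
  ⟨hbc, hcd, hde, hea, hab, hbd, hbe, hce, mt G.adj_symm hac, mt G.adj_symm had⟩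

theorem nonempty_embedding_of_adj_iff {W : Type*} {H : SimpleGraph W} (f : W → V)
    (hf : f.Injective) (h : ∀ i j, G.Adj (f i) (f j) ↔ H.Adj i j) : Nonempty (H ↪g G) :=
  ⟨⟨⟨f, hf⟩, h _ _⟩⟩

theorem IndFree.induce {W : Type*} {H : SimpleGraph W} (h : IndFree H G) (s : Set V) :
    IndFree H (G.induce s) :=
  ⟨fun f => h.false (f.trans (Embedding.induce s))⟩

theorem IsInducedP4.of_embedding (f : graphP4 ↪g G) :
    IsInducedP4 G (f 0) (f 1) (f 2) (f 3) := by
  refine ⟨?_, ?_, ?_, ?_, ?_, ?_⟩ <;> simp only [f.map_adj_iff] <;> simp [graphP4]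

theorem IsInducedP4.not_indFree (h : IsInducedP4 G a b c d) : ¬IndFree graphP4 G := by
  obtain ⟨hab, hbc, hcd, hac, had, hbd⟩ := h
  have := hab.ne; have := hbc.ne; have := hcd.ne
  have := G.ne_of_adj_of_not_adj hab (mt G.adj_symm hbd)
  have := G.ne_of_adj_of_not_adj hab.symm (mt G.adj_symm had)
  have := G.ne_of_adj_of_not_adj hcd had
  refine fun hG => hG.false (nonempty_embedding_of_adj_iff ![a, b, c, d] ?_ ?_).some
  · intro i j hij
    fin_cases i <;> fin_cases j <;> simp_all
  · intro i j
    fin_cases i <;> fin_cases j <;> simp_all [graphP4, G.adj_comm]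

theorem IsInducedP4.dominates (hG : IndFree graphP4K1 G) (h : IsInducedP4 G a b c d) (x : V) :
    G.Adj x a ∨ G.Adj x b ∨ G.Adj x c ∨ G.Adj x d := by
  by_contra! ⟨hxa, hxb, hxc, hxd⟩
  obtain ⟨hab, hbc, hcd, hac, had, hbd⟩ := h
  have := hab.ne; have := hbc.ne; have := hcd.ne
  have := G.ne_of_adj_of_not_adj hab (mt G.adj_symm hbd)
  have := G.ne_of_adj_of_not_adj hab.symm (mt G.adj_symm had)
  have := G.ne_of_adj_of_not_adj hcd had
  have := G.ne_of_adj_of_not_adj hab hxb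
  have := G.ne_of_adj_of_not_adj hab.symm hxa
  have := G.ne_of_adj_of_not_adj hbc.symm hxb
  have := G.ne_of_adj_of_not_adj hcd.symm hxc
  refine hG.false (nonempty_embedding_of_adj_iff ![a, b, c, d, x] ?_ ?_).some
  · intro i j hij
    fin_cases i <;> fin_cases j <;> simp_all
  · intro i j
    fin_cases i <;> fin_cases j <;> simp_all [graphP4K1, G.adj_comm]

theorem IndFree.adj_of_graphC4 (hG : IndFree graphC4 G) (huv : u ≠ v) (hnuv : ¬G.Adj u v)
    (hxy : x ≠ y) (hux : G.Adj u x) (hxv : G.Adj x v) (hvy : G.Adj v y) (hyu : G.Adj y u) :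
    G.Adj x y := by
  by_contra hnxy
  have := hux.ne; have := hxv.ne; have := hvy.ne; have := hyu.ne
  refine hG.false (nonempty_embedding_of_adj_iff ![u, x, v, y] ?_ ?_).some
  · intro i j hij
    fin_cases i <;> fin_cases j <;> simp_all
  · intro i j
    fin_cases i <;> fin_cases j <;> simp_all [graphC4, G.adj_comm]

theorem IndFree.isInducedP4_of_graphC4 (hG : IndFree graphC4 G) (hab : G.Adj a b)
    (hbc : G.Adj b c) (hcd : G.Adj c d) (hac : ¬G.Adj a c) (hbd : ¬G.Adj b d) (hac' : a ≠ c)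
    (hbd' : b ≠ d) : IsInducedP4 G a b c d :=
  ⟨hab, hbc, hcd, hac, fun had => hbd (hG.adj_of_graphC4 hac' hac hbd' hab hbc hcd had.symm),
    hbd⟩

namespace SimpleGraph

theorem Colorable.of_induce_of_induce_compl {s : Set V} {n : ℕ}
    (hs : ∀ u ∈ s, ∀ v ∉ s, ¬G.Adj u v) (h : (G.induce s).Colorable n)
    (h' : (G.induce sᶜ).Colorable n) : G.Colorable n := by
  classical
  obtain ⟨C⟩ := h
  obtain ⟨C'⟩ := h'
  refine ⟨Coloring.mk (fun v => if hv : v ∈ s then C ⟨v, hv⟩ else C' ⟨v, hv⟩) ?_⟩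
  intro u v huv
  by_cases hu : u ∈ s <;> by_cases hv : v ∈ s <;> simp only [hu, hv, dite_true, dite_false]
  · exact C.valid (show (G.induce s).Adj ⟨u, hu⟩ ⟨v, hv⟩ from huv)
  · exact absurd huv (hs u hu v hv)
  · exact absurd huv.symm (hs v hv u hu)
  · exact C'.valid (show (G.induce sᶜ).Adj ⟨u, hu⟩ ⟨v, hv⟩ from huv)

theorem Colorable.succ_of_induce_compl_singleton {n : ℕ} (x : V)
    (h : (G.induce {x}ᶜ).Colorable n) : G.Colorable (n + 1) := by
  classical
  obtain ⟨C⟩ := h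
  refine ⟨Coloring.mk (fun v => if hv : v = x then Fin.last n else (C ⟨v, hv⟩).castSucc) ?_⟩
  intro u v huv
  by_cases hu : u = x <;> by_cases hv : v = x <;> simp only [hu, hv, dite_true, dite_false]
  · exact absurd (hu.trans hv.symm) huv.ne
  · exact (Fin.castSucc_lt_last _).ne'
  · exact (Fin.castSucc_lt_last _).ne
  · exact fun hC => C.valid (show (G.induce {x}ᶜ).Adj ⟨u, hu⟩ ⟨v, hv⟩ from huv)
      (Fin.castSucc_injective _ hC)

theorem cliqueNum_induce_compl_singleton_lt [Finite V] (hx : ∀ y, y ≠ x → G.Adj x y) :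
    (G.induce {x}ᶜ).cliqueNum < G.cliqueNum := by
  classical
  obtain ⟨s, hs⟩ := (G.induce {x}ᶜ).exists_isNClique_cliqueNum
  have hs' := ((isNClique_induce_iff _ _ _).1 hs).insert (a := x) fun y hy => by
    obtain ⟨⟨y, hyx⟩, -, rfl⟩ := Finset.mem_map.1 hy
    exact hx y hyx
  have := hs'.isClique.card_le_cliqueNum
  rw [hs'.card_eq] at this
  omega

end SimpleGraph

theorem adj_of_adj_of_forall_degree_le [Fintype V] [DecidableRel G.Adj]
    (hP4 : IndFree graphP4 G) (hC4 : IndFree graphC4 G) (hx : ∀ v, G.degree v ≤ G.degree x)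
    (hxs : G.Adj x s) (hst : G.Adj s t) (htx : t ≠ x) : G.Adj x t := by
  classical
  by_contra hxt
  have hsub : insert x (insert t ((G.neighborFinset x).erase s)) ⊆ G.neighborFinset s := by
    intro w hw
    simp only [Finset.mem_insert, Finset.mem_erase, mem_neighborFinset] at hw ⊢
    obtain rfl | rfl | ⟨hws, hxw⟩ := hw
    · exact hxs.symm
    · exact hst
    · by_contra hsw
      exact (hC4.isInducedP4_of_graphC4 hxw.symm hxs hst (mt G.adj_symm hsw) hxt hws
        htx.symm).not_indFree hP4
  have hcard := Finset.card_le_card hsub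
  rw [Finset.card_insert_of_notMem, Finset.card_insert_of_notMem, Finset.card_erase_of_mem,
    card_neighborFinset_eq_degree, card_neighborFinset_eq_degree] at hcard
  · have := hx s
    have := (G.degree_pos_iff_exists_adj x).2 ⟨s, hxs⟩
    omega
  · simpa using hxs
  · simp [hxt]
  · simp [htx.symm]

theorem colorable_cliqueNum_of_indFree [Finite V] (hP4 : IndFree graphP4 G)
    (hC4 : IndFree graphC4 G) : G.Colorable G.cliqueNum := by
  induction h : Nat.card V using Nat.strong_induction_on generalizing V with
  | _ n ih =>
  classical
  have ih_induce (s : Set V) (hs : s ≠ Set.univ) :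
      (G.induce s).Colorable (G.induce s).cliqueNum :=
    ih _ (h ▸ Nat.card_coe_set_eq s ▸ Set.ncard_lt_card hs) (hP4.induce s) (hC4.induce s) rfl
  cases isEmpty_or_nonempty V
  · exact .of_isEmpty _
  have := Fintype.ofFinite V
  obtain ⟨x, hx⟩ := Finite.exists_max (G.degree ·)
  by_cases huniv : ∀ y, y ≠ x → G.Adj x y
  · exact ((ih_induce {x}ᶜ (by simp)).succ_of_induce_compl_singleton x).mono
      (cliqueNum_induce_compl_singleton_lt huniv)
  push Not at huniv
  obtain ⟨y, hyx, hxy⟩ := huniv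
  let s : Set V := {v | v = x ∨ G.Adj x v}
  refine Colorable.of_induce_of_induce_compl (s := s) ?_
    ((ih_induce s ?_).mono (cliqueNum_induce_le s))
    ((ih_induce sᶜ ?_).mono (cliqueNum_induce_le sᶜ))
  · rintro u (rfl | hxu) v hv huv
    · exact hv (.inr huv)
    · exact hv (.inr (adj_of_adj_of_forall_degree_le hP4 hC4 hx hxu huv (hv ∘ .inl)))
  · exact fun hs => absurd (hs ▸ Set.mem_univ y) (by rintro (h | h) <;> contradiction)
  · exact fun hs => absurd (hs ▸ Set.mem_univ x) (by simp [s])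

theorem isPerfect_of_indFree [Finite V] (hP4 : IndFree graphP4 G) (hC4 : IndFree graphC4 G) :
    IsPerfect G := fun S =>
  le_antisymm (colorable_cliqueNum_of_indFree (hP4.induce S) (hC4.induce S)).chromaticNumber_le
    cliqueNum_le_chromaticNumber

theorem IsInducedP4.connected (hG : IndFree graphP4K1 G) (h : IsInducedP4 G a b c d) :
    G.Connected := by
  have hb := h.1.reachable
  have hc := hb.trans h.2.1.reachable
  have hd := hc.trans h.2.2.1.reachable
  refine (connected_iff_exists_forall_reachable G).2 ⟨a, fun w => ?_⟩
  rcases h.dominates hG w with hw | hw | hw | hw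
  exacts [hw.symm.reachable, hb.trans hw.symm.reachable, hc.trans hw.symm.reachable,
    hd.trans hw.symm.reachable]

theorem IndFree.graphP4_induce_of_forall_not_adj (hG : IndFree graphP4K1 G) {s : Set V}
    (hs : ∀ v ∈ s, ¬G.Adj z v) : IndFree graphP4 (G.induce s) := by
  refine ⟨fun f => ?_⟩
  have hf : IsInducedP4 G (f 0) (f 1) (f 2) (f 3) := IsInducedP4.of_embedding f
  rcases hf.dominates hG z with h | h | h | h
  exacts [hs _ (f 0).2 h, hs _ (f 1).2 h, hs _ (f 2).2 h, hs _ (f 3).2 h]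

theorem IsInducedP4.exists_of_neighborSet_subset (h : IsInducedP4 G z a b c) (hzt : G.Adj z t)
    (ht : G.neighborSet t ⊆ insert z (G.neighborSet z)) : ∃ a b c, IsInducedP4 G t a b c := by
  obtain ⟨hza, hab, hbc, hzb, hzc, hac⟩ := h
  have htb : ¬G.Adj t b := fun htb => (ht htb).elim (fun hbz => hzc (hbz ▸ hbc)) hzb
  have htc : ¬G.Adj t c := fun htc => (ht htc).elim (fun hcz => hzb (hcz ▸ hbc.symm)) hzc
  by_cases hta : G.Adj t a
  · exact ⟨a, b, c, hta, hab, hbc, htb, htc, hac⟩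
  · exact ⟨z, a, b, hzt.symm, hza, hab, hta, htb, hzb⟩

theorem degree_lt_of_neighborSet_subset [Fintype V] [DecidableRel G.Adj] (hzt : G.Adj z t)
    (hzu : G.Adj z u) (htu : t ≠ u) (hntu : ¬G.Adj t u)
    (ht : G.neighborSet t ⊆ insert z (G.neighborSet z)) : G.degree t < G.degree z := by
  classical
  have hsub : G.neighborFinset t ⊆ insert z (((G.neighborFinset z).erase t).erase u) := by
    intro w hw
    rw [mem_neighborFinset] at hw
    simp only [Finset.mem_insert, Finset.mem_erase, mem_neighborFinset]
    rcases ht hw with rfl | hzw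
    · exact .inl rfl
    · exact .inr ⟨fun hwu => hntu (hwu ▸ hw), fun hwt => G.irrefl (hwt ▸ hw), hzw⟩
  have := (Finset.card_le_card hsub).trans (Finset.card_insert_le _ _)
  rw [Finset.card_erase_of_mem, Finset.card_erase_of_mem, card_neighborFinset_eq_degree,
    card_neighborFinset_eq_degree] at this
  · have : 2 ≤ G.degree z := by
      rw [← card_neighborFinset_eq_degree]
      exact Finset.one_lt_card.2 ⟨t, by simpa, u, by simpa, htu⟩
    omega
  · simpa
  · simpa [Ne.symm htu]

def HasOuterNeighbors (G : SimpleGraph V) (z : V) : Prop :=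
  ∀ ⦃t u⦄, G.Adj z t → G.Adj z u → t ≠ u → ¬G.Adj t u → ∃ x, G.Adj t x ∧ x ≠ z ∧ ¬G.Adj z x

theorem IsInducedP4.hasOuterNeighbors [Fintype V] [DecidableRel G.Adj]
    (h : IsInducedP4 G z a b c)
    (hmin : ∀ t, (∃ a b c, IsInducedP4 G t a b c) → G.degree z ≤ G.degree t) :
    HasOuterNeighbors G z := by
  intro t u hzt hzu htu hntu
  by_contra! hout
  have ht : G.neighborSet t ⊆ insert z (G.neighborSet z) := fun w htw =>
    or_iff_not_imp_left.2 (hout w htw)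
  exact (degree_lt_of_neighborSet_subset hzt hzu htu hntu ht).not_ge
    (hmin t (h.exists_of_neighborSet_subset hzt ht))

theorem IndFree.not_adj_of_adj_outside (hG : IndFree graphC4 G) (hzt : G.Adj z t)
    (hzs : G.Adj z s) (hts : t ≠ s) (hnts : ¬G.Adj t s) (htx : G.Adj t x) (hxz : x ≠ z)
    (hzx : ¬G.Adj z x) : ¬G.Adj x s :=
  fun hxs => hzx (hG.adj_of_graphC4 hts hnts hxz htx hxs hzs.symm hzt).symm

theorem HasOuterNeighbors.adj_or_adj_or_adj (hz : HasOuterNeighbors G z)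
    (h1 : IndFree graphP4K1 G) (h2 : IndFree graphC4 G) (hzu : G.Adj z u) (hzv : G.Adj z v)
    (hzw : G.Adj z w) (huv : u ≠ v) (huw : u ≠ w) (hvw : v ≠ w) :
    G.Adj u v ∨ G.Adj u w ∨ G.Adj v w := by
  by_contra! ⟨hnuv, hnuw, hnvw⟩
  obtain ⟨xu, huxu, hxuz, hzxu⟩ := hz hzu hzv huv hnuv
  obtain ⟨xv, hvxv, hxvz, hzxv⟩ := hz hzv hzu huv.symm (mt G.adj_symm hnuv)
  have hxuv := h2.not_adj_of_adj_outside hzu hzv huv hnuv huxu hxuz hzxu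
  have hxuw := h2.not_adj_of_adj_outside hzu hzw huw hnuw huxu hxuz hzxu
  have hxvu := h2.not_adj_of_adj_outside hzv hzu huv.symm (mt G.adj_symm hnuv) hvxv hxvz hzxv
  have hxvw := h2.not_adj_of_adj_outside hzv hzw hvw hnvw hvxv hxvz hzxv
  have hxuxv : G.Adj xu xv := by
    have hp : IsInducedP4 G xu u z w :=
      ⟨huxu.symm, hzu.symm, hzw, mt G.adj_symm hzxu, hxuw, hnuw⟩
    rcases hp.dominates h1 xv with h | h | h | h
    exacts [h.symm, absurd h hxvu, absurd h.symm hzxv, absurd h hxvw]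
  have hp : IsInducedP4 G u xu xv v := ⟨huxu, hxuxv, hvxv.symm, mt G.adj_symm hxvu, hnuv, hxuv⟩
  rcases hp.dominates h1 w with h | h | h | h
  exacts [hnuw h.symm, hxuw h.symm, hxvw h.symm, hnvw h.symm]

theorem adj_or_adj_of_private_outer_neighbors (h1 : IndFree graphP4K1 G)
    (h2 : IndFree graphC4 G) (hza : G.Adj z a) (hzb : G.Adj z b) (hab : G.Adj a b)
    (hxz : x ≠ z) (hzx : ¬G.Adj z x) (hxa : G.Adj x a) (hxb : ¬G.Adj x b) (hyz : y ≠ z)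
    (hzy : ¬G.Adj z y) (hyb : G.Adj y b) (hya : ¬G.Adj y a) (hzw : G.Adj z w) :
    G.Adj w a ∨ G.Adj w b := by
  by_contra! ⟨hwa, hwb⟩
  have hp : IsInducedP4 G x a b y := h2.isInducedP4_of_graphC4 hxa hab hyb.symm hxb
    (mt G.adj_symm hya) (fun h => hzx (h ▸ hzb)) (fun h => hzy (h ▸ hza))
  rcases hp.dominates h1 w with h | h | h | h
  · exact h2.not_adj_of_adj_outside hza hzw (G.ne_of_adj_of_not_adj hab hwb)
      (mt G.adj_symm hwa) hxa.symm hxz hzx h.symm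
  · exact hwa h
  · exact hwb h
  · exact h2.not_adj_of_adj_outside hzb hzw (G.ne_of_adj_of_not_adj hab.symm hwa)
      (mt G.adj_symm hwb) hyb.symm hyz hzy h.symm

theorem HasOuterNeighbors.adj_or_adj_of_isInducedC5 (hz : HasOuterNeighbors G z)
    (h1 : IndFree graphP4K1 G) (h2 : IndFree graphC4 G) (hc : IsInducedC5 G a b c d e)
    (hza : G.Adj z a) (hzb : G.Adj z b) (hzc : G.Adj z c) (hzd : G.Adj z d) (hze : G.Adj z e)
    (hxz : x ≠ z) (hzx : ¬G.Adj z x) (hxa : G.Adj x a) (hxe : G.Adj x e) :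
    G.Adj x b ∨ G.Adj x d := by
  by_contra! ⟨hxb, hxd⟩
  obtain ⟨hab, hbc, hcd, hde, hea, hac, had, hbd, hbe, hce⟩ := hc
  have hca := G.ne_of_adj_of_not_adj hcd had
  have hce' := G.ne_of_adj_of_not_adj hbc.symm (mt G.adj_symm hbe)
  obtain ⟨y, hcy, hyz, hzy⟩ := hz hzc hza hca (mt G.adj_symm hac)
  have hya := h2.not_adj_of_adj_outside hzc hza hca (mt G.adj_symm hac) hcy hyz hzy
  have hye := h2.not_adj_of_adj_outside hzc hze hce' hce hcy hyz hzy
  have hp : IsInducedP4 G d e a b :=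
    ⟨hde, hea, hab, mt G.adj_symm had, mt G.adj_symm hbd, mt G.adj_symm hbe⟩
  rcases hp.dominates h1 y with hyd | h | h | hyb
  · rcases adj_or_adj_of_private_outer_neighbors h1 h2 hze hzd hde.symm hxz hzx hxe hxd hyz hzy
      hyd hye hzb with h | h
    exacts [hbe h, hbd h]
  · exact hye h
  · exact hya h
  · rcases adj_or_adj_of_private_outer_neighbors h1 h2 hza hzb hab hxz hzx hxa hxb hyz hzy
      hyb hya hzd with h | h
    exacts [had h.symm, hbd h.symm]

theorem HasOuterNeighbors.not_isInducedC5 (hz : HasOuterNeighbors G z)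
    (h1 : IndFree graphP4K1 G) (h2 : IndFree graphC4 G) (hc : IsInducedC5 G a b c d e)
    (hza : G.Adj z a) (hzb : G.Adj z b) (hzc : G.Adj z c) (hzd : G.Adj z d)
    (hze : G.Adj z e) : False := by
  have ⟨hab, hbc, hcd, hde, hea, hac, had, hbd, hbe, hce⟩ := hc
  have hac' := G.ne_of_adj_of_not_adj hea.symm hce
  obtain ⟨x, hax, hxz, hzx⟩ := hz hza hzc hac' hac
  have hxc := h2.not_adj_of_adj_outside hza hzc hac' hac hax hxz hzx
  have hxd := h2.not_adj_of_adj_outside hza hzd (G.ne_of_adj_of_not_adj hab (mt G.adj_symm hbd))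
    had hax hxz hzx
  have hp : IsInducedP4 G b c d e := ⟨hbc, hcd, hde, hbd, hbe, hce⟩
  rcases hp.dominates h1 x with hxb | h | h | hxe
  · have hxe := h2.not_adj_of_adj_outside hzb hze
      (G.ne_of_adj_of_not_adj hbc (mt G.adj_symm hce)) hbe hxb.symm hxz hzx
    rcases hz.adj_or_adj_of_isInducedC5 h1 h2 hc.rotate hzb hzc hzd hze hza hxz hzx hxb
      hax.symm with h | h
    exacts [hxc h, hxe h]
  · exact hxc h
  · exact hxd h
  · have hxb := h2.not_adj_of_adj_outside hze hzb (G.ne_of_adj_of_not_adj hde.symm hbd)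
      (mt G.adj_symm hbe) hxe.symm hxz hzx
    rcases hz.adj_or_adj_of_isInducedC5 h1 h2 hc hza hzb hzc hzd hze hxz hzx hax.symm
      hxe with h | h
    exacts [hxb h, hxd h]

theorem exists_isClique_union_eq (h2 : IndFree graphC4 G) {S : Set V}
    (h3 : ∀ u ∈ S, ∀ v ∈ S, ∀ w ∈ S, u ≠ v → u ≠ w → v ≠ w →
      G.Adj u v ∨ G.Adj u w ∨ G.Adj v w)
    (h5 : ∀ a ∈ S, ∀ b ∈ S, ∀ c ∈ S, ∀ d ∈ S, ∀ e ∈ S, ¬IsInducedC5 G a b c d e) :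
    ∃ A B, A ∪ B = S ∧ Disjoint A B ∧ G.IsClique A ∧ G.IsClique B := by
  by_cases hS : G.IsClique S
  · exact ⟨S, ∅, Set.union_empty S, Set.disjoint_empty S, hS, Set.pairwise_empty _⟩
  obtain ⟨u₀, hu₀, v₀, hv₀, huv₀, hnuv₀⟩ : ∃ u ∈ S, ∃ v ∈ S, u ≠ v ∧ ¬G.Adj u v := by
    simpa [IsClique, Set.Pairwise] using hS
  set X := {x ∈ S | x ≠ v₀ ∧ ¬G.Adj x v₀}
  -- `A` is the set of vertices complete to `X`: two non-adjacent vertices outside `A`,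
  -- together with their non-neighbours in `X` and `v₀`, would form an induced `C₅`.
  set A := {s ∈ S | ∀ x ∈ X, x ≠ s → G.Adj s x}
  have hX : G.IsClique X := fun x hx y hy hxy => by
    simpa [hx.2.2, hy.2.2] using h3 x hx.1 y hy.1 v₀ hv₀ hxy hx.2.1 hy.2.1
  have hXA : X ⊆ A := fun x hx => ⟨hx.1, fun y hy hyx => hX hx hy hyx.symm⟩
  have hu₀X : u₀ ∈ X := ⟨hu₀, huv₀, hnuv₀⟩
  have hadj_v₀ : ∀ s ∈ S, s ∉ X → s ≠ v₀ → G.Adj s v₀ := fun s hs hsX hsv =>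
    not_not.1 fun h => hsX ⟨hs, hsv, h⟩
  refine ⟨A, S \ A, Set.union_sdiff_cancel fun s hs => hs.1, Set.disjoint_sdiff_right, ?_, ?_⟩
  · have hadj_u₀v₀ : ∀ s ∈ A, s ∉ X → G.Adj s u₀ ∧ G.Adj s v₀ := fun s hs hsX => by
      have hsu := hs.2 u₀ hu₀X fun h => hsX (h ▸ hu₀X)
      exact ⟨hsu, hadj_v₀ s hs.1 hsX (G.ne_of_adj_of_not_adj hsu (mt G.adj_symm hnuv₀))⟩
    intro s hs t ht hst
    by_cases hsX : s ∈ X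
    · exact (ht.2 s hsX hst).symm
    by_cases htX : t ∈ X
    · exact hs.2 t htX hst.symm
    obtain ⟨hsu, hsv⟩ := hadj_u₀v₀ s hs hsX
    obtain ⟨htu, htv⟩ := hadj_u₀v₀ t ht htX
    exact h2.adj_of_graphC4 huv₀ hnuv₀ hst hsu.symm hsv htv.symm htu
  · have hnonadj : ∀ s ∈ S \ A, ∃ x ∈ X, x ≠ s ∧ ¬G.Adj s x := fun s hs => by
      simpa [A, hs.1] using hs.2
    intro s hs t ht hst
    by_contra hnst
    obtain ⟨xs, hxs, hxss, hsxs⟩ := hnonadj s hs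
    obtain ⟨xt, hxt, hxtt, htxt⟩ := hnonadj t ht
    have hsX : s ∉ X := fun h => hs.2 (hXA h)
    have htX : t ∉ X := fun h => ht.2 (hXA h)
    have hsxt : G.Adj s xt := by
      simpa [hnst, htxt] using
        h3 s hs.1 t ht.1 xt hxt.1 hst (fun h => hsX (h ▸ hxt)) hxtt.symm
    have htxs : G.Adj t xs := by
      simpa [hnst, hsxs, G.adj_comm t s] using
        h3 t ht.1 s hs.1 xs hxs.1 hst.symm (fun h => htX (h ▸ hxs)) hxss.symm
    have hsv := hadj_v₀ s hs.1 hsX (G.ne_of_adj_of_not_adj hsxt (mt G.adj_symm hxt.2.2))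
    have htv := hadj_v₀ t ht.1 htX (G.ne_of_adj_of_not_adj htxs (mt G.adj_symm hxs.2.2))
    have hxtxs := hX hxt hxs (G.ne_of_adj_of_not_adj hsxt.symm (mt G.adj_symm hsxs))
    exact h5 s hs.1 xt hxt.1 xs hxs.1 t ht.1 v₀ hv₀
      ⟨hsxt, hxtxs, htxs.symm, htv, hsv.symm, hsxs, hnst, mt G.adj_symm htxt, hxt.2.2, hxs.2.2⟩

theorem partition_of_neighborSet_eq_union {A B : Set V} (hAB : A ∪ B = G.neighborSet z)
    (hAB' : Disjoint A B) :
    {v | v ≠ z ∧ ¬G.Adj z v} ∪ insert z A ∪ B = Set.univ ∧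
      Disjoint {v | v ≠ z ∧ ¬G.Adj z v} (insert z A) ∧
      Disjoint {v | v ≠ z ∧ ¬G.Adj z v} B ∧ Disjoint (insert z A) B := by
  have hzA : A ⊆ G.neighborSet z := hAB ▸ Set.subset_union_left
  have hzB : B ⊆ G.neighborSet z := hAB ▸ Set.subset_union_right
  refine ⟨Set.eq_univ_of_forall fun v => ?_, ?_, ?_, ?_⟩
  · by_cases hvz : v = z
    · exact .inl (.inr (.inl hvz))
    by_cases hzv : G.Adj z v
    · rcases (hAB ▸ hzv : v ∈ A ∪ B) with hv | hv
      exacts [.inl (.inr (.inr hv)), .inr hv]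
    · exact .inl (.inl ⟨hvz, hzv⟩)
  · exact Set.disjoint_left.2 fun v hv hv' => hv'.elim hv.1 fun h => hv.2 (hzA h)
  · exact Set.disjoint_left.2 fun v hv hvB => hv.2 (hzB hvB)
  · exact Set.disjoint_left.2 fun v hv hvB =>
      hv.elim (fun h => G.irrefl (h ▸ hzB hvB)) fun h => Set.disjoint_left.1 hAB' h hvB

end

/-- Every imperfect `(P₄ ∪ K₁, C₄)`-free graph is connected and its
vertex set can be partitioned into `V₁, V₂, V₃` with `V₁` inducing a `P₄`-free
subgraph and `V₂`, `V₃` cliques. -/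
theorem stmt0 {V : Type*} [Fintype V] (G : SimpleGraph V)
    (h1 : IndFree graphP4K1 G) (h2 : IndFree graphC4 G)
    (himp : ¬ IsPerfect G) :
    G.Connected ∧
      ∃ V1 V2 V3 : Set V,
        V1 ∪ V2 ∪ V3 = (Set.univ : Set V) ∧
        Disjoint V1 V2 ∧ Disjoint V1 V3 ∧ Disjoint V2 V3 ∧
        IndFree graphP4 (G.induce V1) ∧
        G.IsClique V2 ∧ G.IsClique V3 := by
  classical
  by_cases hP4 : IndFree graphP4 G
  · exact absurd (isPerfect_of_indFree hP4 h2) himp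
  obtain ⟨f⟩ := not_isEmpty_iff.1 hP4
  obtain ⟨z, ⟨a, b, c, hz⟩, hmin⟩ := Set.exists_min_image {t | ∃ a b c, IsInducedP4 G t a b c}
    (G.degree ·) (Set.toFinite _) ⟨_, _, _, _, IsInducedP4.of_embedding f⟩
  have hout := hz.hasOuterNeighbors hmin
  obtain ⟨A, B, hAB, hAB', hA, hB⟩ := exists_isClique_union_eq (S := G.neighborSet z) h2
    (fun u hu v hv w hw => hout.adj_or_adj_or_adj h1 h2 hu hv hw)
    (fun a ha b hb c hc d hd e he hC5 => hout.not_isInducedC5 h1 h2 hC5 ha hb hc hd he)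
  obtain ⟨hcover, h12, h13, h23⟩ := partition_of_neighborSet_eq_union hAB hAB'
  exact ⟨hz.connected h1, _, _, _, hcover, h12, h13, h23,
    h1.graphP4_induce_of_forall_not_adj fun v hv => hv.2,
    hA.insert fun v hv _ => (hAB ▸ Set.mem_union_left B hv : v ∈ G.neighborSet z), hB⟩
end

section
/- Let G be a (2K2, K1+C4)-free graph. Then χ(G) ≤ ω(G) + 5. -/
open SimpleGraph

/-!
If `G` has no induced `C₄`, it is pseudo-split. Fix a maximum clique `K`. A vertex missing exactly
one vertex `k` of `K` may take the colour of `k`: two adjacent such vertices missing the same `k`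
would extend `K \ {k}` to a larger clique. The vertices missing at least two vertices of `K` form an
independent set, because `2K₂`-freeness and `C₄`-freeness force the sets of missed vertices of two
adjacent vertices to be nested and to share at most one vertex. Hence `χ ≤ ω + 1`.

Otherwise fix an induced `C₄` `abcd`. Every vertex is a common neighbour of `b, d`, a common
neighbour of `a, c`, or misses both ends of one of the four edges of the cycle; the last four sets
are independent since `G` is `2K₂`-free. Wheel-freeness makes each common neighbourhood a disjoint
union of cliques, hence colourable with its clique number, and a further `2K₂`/wheel argument shows
that these two clique numbers add up to at most `ω + 1`. Hence `χ ≤ (ω + 1) + 4`.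
-/

open Finset

namespace SimpleGraph

variable {V : Type*} {G : SimpleGraph V}

theorem Colorable.induce_union {s t : Set V} {m n : ℕ} (hs : (G.induce s).Colorable m)
    (ht : (G.induce t).Colorable n) : (G.induce (s ∪ t)).Colorable (m + n) := by
  classical
  obtain ⟨cs⟩ := hs
  obtain ⟨ct⟩ := ht
  let c : (G.induce (s ∪ t)).Coloring (Fin m ⊕ Fin n) := Coloring.mk
    (fun v => if hv : v.1 ∈ s then .inl (cs ⟨v, hv⟩) else .inr (ct ⟨v, v.2.resolve_left hv⟩))
    (by
      rintro ⟨v, hv⟩ ⟨w, hw⟩ hvw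
      by_cases hvs : v ∈ s <;> by_cases hws : w ∈ s <;> simp [hvs, hws]
      · exact cs.valid (G := G.induce s) (v := ⟨v, hvs⟩) (w := ⟨w, hws⟩) hvw
      · exact ct.valid (G := G.induce t) hvw)
  simpa using c.colorable

theorem colorable_of_induce_univ {n : ℕ} (h : (G.induce Set.univ).Colorable n) :
    G.Colorable n :=
  h.of_hom G.induceUnivIso.symm.toHom

theorem colorable_induce_one_of_isIndep {s : Set V} (h : IsIndep G s) :
    (G.induce s).Colorable 1 := by
  rw [colorable_one_iff]
  ext v w
  simpa using fun hvw : G.Adj v w => h v.2 w.2 hvw.ne hvw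

def IsCluster (G : SimpleGraph V) : Prop :=
  ∀ ⦃x y z⦄, G.Adj z x → G.Adj z y → x ≠ y → G.Adj x y

theorem IsCluster.colorable_cliqueNum [Finite V] (hG : G.IsCluster) :
    G.Colorable G.cliqueNum := by
  classical
  have := Fintype.ofFinite V
  let e := Fintype.equivFin V
  let below (v : V) : Finset V := {u | G.Adj u v ∧ e u < e v}
  have card_below_lt (v : V) : #(below v) < G.cliqueNum := by
    have hclique : G.IsClique (insert v (below v) : Finset V) := by
      rw [coe_insert, isClique_insert]
      refine ⟨fun x hx y hy hxy => ?_, fun u hu _ => (mem_filter.1 hu).2.1.symm⟩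
      exact hG (mem_filter.1 hx).2.1.symm (mem_filter.1 hy).2.1.symm hxy
    have := hclique.card_le_cliqueNum
    rwa [card_insert_of_notMem (by simp [below])] at this
  have below_ssubset ⦃u v : V⦄ (huv : G.Adj u v) (h : e u < e v) : below u ⊂ below v := by
    refine (ssubset_iff_of_subset fun w hw => ?_).2 ⟨u, by simp [below, huv, h], by simp [below]⟩
    obtain ⟨hwu, hlt⟩ := (mem_filter.1 hw).2
    have hwv : w ≠ v := ne_of_apply_ne e (hlt.trans h).ne
    exact mem_filter.2 ⟨mem_univ _, hG hwu.symm huv hwv, hlt.trans h⟩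
  refine ⟨Coloring.mk (fun v => ⟨#(below v), card_below_lt v⟩) fun {u v} huv heq => ?_⟩
  rw [Fin.mk.injEq] at heq
  rcases lt_trichotomy (e u) (e v) with h | h | h
  · exact (card_lt_card (below_ssubset huv h)).ne heq
  · exact huv.ne (e.injective h)
  · exact (card_lt_card (below_ssubset huv.symm h)).ne heq.symm

theorem exists_isClique_card_eq_cliqueNum_induce (s : Set V) :
    ∃ t : Finset V, ↑t ⊆ s ∧ G.IsClique (t : Set V) ∧ #t = (G.induce s).cliqueNum := by
  obtain ⟨t, ht⟩ := (G.induce s).exists_isNClique_cliqueNum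
  rw [isNClique_induce_iff] at ht
  exact ⟨t.map (.subtype _), by simp, ht.isClique, ht.card_eq⟩

theorem card_add_card_le_cliqueNum_add_one_of_forall_adj [Finite V] {Q R : Finset V}
    (hQ : G.IsClique (Q : Set V)) (hR : G.IsClique (R : Set V)) (hQR : Disjoint Q R) (x₀ : V)
    (hadj : ∀ x ∈ Q, x ≠ x₀ → ∀ y ∈ R, G.Adj x y) : #Q + #R ≤ G.cliqueNum + 1 := by
  classical
  have hclique : G.IsClique (Q.erase x₀ ∪ R : Finset V) := by
    rw [coe_union, IsClique, Set.pairwise_union]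
    refine ⟨hQ.subset (by simp), hR, fun x hx y hy _ => ?_⟩
    simp only [coe_erase, Set.mem_sdiff, mem_coe, Set.mem_singleton_iff] at hx
    exact ⟨hadj x hx.1 hx.2 y hy, (hadj x hx.1 hx.2 y hy).symm⟩
  have := hclique.card_le_cliqueNum
  rw [card_union_of_disjoint (hQR.mono_left (erase_subset _ _))] at this
  have := pred_card_le_card_erase (s := Q) (a := x₀)
  omega

structure IsInducedC4 (G : SimpleGraph V) (a b c d : V) : Prop where
  adj_ab : G.Adj a b
  adj_bc : G.Adj b c
  adj_cd : G.Adj c d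
  adj_da : G.Adj d a
  not_adj_ac : ¬G.Adj a c
  not_adj_bd : ¬G.Adj b d
  ne_ac : a ≠ c
  ne_bd : b ≠ d

theorem IsInducedC4.rotate {a b c d : V} (hC : G.IsInducedC4 a b c d) : G.IsInducedC4 b c d a :=
  ⟨hC.adj_bc, hC.adj_cd, hC.adj_da, hC.adj_ab, hC.not_adj_bd, fun h => hC.not_adj_ac h.symm,
    hC.ne_bd, hC.ne_ac.symm⟩

end SimpleGraph

section InducedSubgraphs

variable {V : Type*} {G : SimpleGraph V} {u v : V}

theorem IndFree.false_of_adj_iff {W : Type*} {H : SimpleGraph W} (h : IndFree H G) (f : W → V)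
    (hf : f.Injective) (hadj : ∀ i j, G.Adj (f i) (f j) ↔ H.Adj i j) : False :=
  h.false ⟨⟨f, hf⟩, hadj _ _⟩

theorem IndFree.false_of_induced_2K2 (h : IndFree graph2K2 G) {a b c d : V}
    (hab : G.Adj a b) (hcd : G.Adj c d) (hac : ¬G.Adj a c) (had : ¬G.Adj a d)
    (hbc : ¬G.Adj b c) (hbd : ¬G.Adj b d) : False := by
  refine h.false_of_adj_iff ![a, b, c, d] (fun i j hij => ?_) fun i j => ?_ <;>
    fin_cases i <;> fin_cases j <;> simp_all [graph2K2, G.adj_comm]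

theorem indFree_graphC4_iff : IndFree graphC4 G ↔ ∀ a b c d, ¬G.IsInducedC4 a b c d := by
  refine ⟨fun h a b c d ⟨hab, hbc, hcd, hda, hac, hbd, nac, nbd⟩ => ?_, fun h => ⟨fun f => ?_⟩⟩
  · refine h.false_of_adj_iff ![a, b, c, d] (fun i j hij => ?_) fun i j => ?_ <;>
      fin_cases i <;> fin_cases j <;> simp_all [graphC4, G.adj_comm]
  · refine h (f 0) (f 1) (f 2) (f 3) ⟨?_, ?_, ?_, ?_, ?_, ?_, f.injective.ne (by decide),
      f.injective.ne (by decide)⟩ <;> rw [f.map_adj_iff] <;> simp [graphC4]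

theorem IndFree.false_of_isInducedC4_hub (h : IndFree graphWheel G) {a b c d e : V}
    (hC : G.IsInducedC4 a b c d) (hea : G.Adj e a) (heb : G.Adj e b) (hec : G.Adj e c)
    (hed : G.Adj e d) : False := by
  obtain ⟨hab, hbc, hcd, hda, hac, hbd, nac, nbd⟩ := hC
  refine h.false_of_adj_iff ![a, b, c, d, e] (fun i j hij => ?_) fun i j => ?_ <;>
    fin_cases i <;> fin_cases j <;> simp_all [graphWheel, G.adj_comm]

theorem IndFree.isIndep_compl_neighborSet_union (h : IndFree graph2K2 G) (huv : G.Adj u v) :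
    IsIndep G (G.neighborSet u ∪ G.neighborSet v)ᶜ := by
  intro x hx y hy _ hxy
  simp only [Set.mem_compl_iff, Set.mem_union, mem_neighborSet, not_or] at hx hy
  exact h.false_of_induced_2K2 hxy huv (fun h => hx.1 h.symm) (fun h => hx.2 h.symm)
    (fun h => hy.1 h.symm) (fun h => hy.2 h.symm)

theorem IndFree.isCluster_induce_commonNeighbors (h : IndFree graphWheel G) (huv : u ≠ v)
    (nuv : ¬G.Adj u v) : (G.induce (G.commonNeighbors u v)).IsCluster := by
  rintro ⟨x, hx⟩ ⟨y, hy⟩ ⟨z, hz⟩ hzx hzy hxy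
  rw [mem_commonNeighbors] at hx hy hz
  by_contra nxy
  exact h.false_of_isInducedC4_hub ⟨hx.1.symm, hy.1, hy.2.symm, hx.2, nxy, nuv,
    fun h => hxy (Subtype.ext h), huv⟩ hzx hz.1.symm hzy hz.2.symm

end InducedSubgraphs

namespace SimpleGraph

variable {V : Type*} {G : SimpleGraph V}

open Classical in
noncomputable def nonNeighborsIn (G : SimpleGraph V) (K : Finset V) (v : V) : Finset V :=
  {k ∈ K | ¬G.Adj v k}

variable {K : Finset V} {v w k : V}

theorem mem_nonNeighborsIn : k ∈ G.nonNeighborsIn K v ↔ k ∈ K ∧ ¬G.Adj v k := by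
  simp [nonNeighborsIn]

theorem adj_of_notMem_nonNeighborsIn (hk : k ∈ K) (h : k ∉ G.nonNeighborsIn K v) :
    G.Adj v k := by
  by_contra hvk
  exact h (mem_nonNeighborsIn.2 ⟨hk, hvk⟩)

theorem IsClique.nonNeighborsIn_eq_singleton (hK : G.IsClique (K : Set V)) (hv : v ∈ K) :
    G.nonNeighborsIn K v = {v} := by
  ext k
  rw [mem_nonNeighborsIn, mem_singleton]
  refine ⟨fun ⟨hk, hvk⟩ => ?_, by rintro rfl; exact ⟨hv, G.irrefl⟩⟩
  by_contra hkv
  exact hvk (hK hv hk (Ne.symm hkv))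

theorem IsClique.notMem_of_card_nonNeighborsIn_ne_one (hK : G.IsClique (K : Set V))
    (hv : #(G.nonNeighborsIn K v) ≠ 1) : v ∉ K :=
  fun hvK => hv (by rw [hK.nonNeighborsIn_eq_singleton hvK, card_singleton])

theorem IsNClique.nonNeighborsIn_nonempty [Finite V] (hK : G.IsNClique G.cliqueNum K)
    (hv : v ∉ K) : (G.nonNeighborsIn K v).Nonempty := by
  classical
  rw [nonempty_iff_ne_empty]
  intro hempty
  have hclique : G.IsClique (insert v K : Finset V) := by
    rw [coe_insert, isClique_insert]
    exact ⟨hK.isClique, fun k hk _ => adj_of_notMem_nonNeighborsIn hk (hempty ▸ notMem_empty k)⟩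
  have := hclique.card_le_cliqueNum
  rw [card_insert_of_notMem hv, hK.card_eq] at this
  omega

theorem IsNClique.one_lt_card_nonNeighborsIn [Finite V] (hK : G.IsNClique G.cliqueNum K)
    (hv : #(G.nonNeighborsIn K v) ≠ 1) : 1 < #(G.nonNeighborsIn K v) := by
  have := (hK.nonNeighborsIn_nonempty
    (hK.isClique.notMem_of_card_nonNeighborsIn_ne_one hv)).card_pos
  omega

-- `(K \ {k}) ∪ {v, w}` would be a clique larger than `K`.
theorem IsNClique.not_adj_of_nonNeighborsIn_eq_singleton [Finite V]
    (hK : G.IsNClique G.cliqueNum K) (hv : G.nonNeighborsIn K v = {k})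
    (hw : G.nonNeighborsIn K w = {k}) : ¬G.Adj v w := by
  classical
  intro hvw
  have hk : k ∈ K := (mem_nonNeighborsIn.1 (hv ▸ mem_singleton_self k)).1
  have adj_of_mem {u} (hu : G.nonNeighborsIn K u = {k}) {k'} (hk' : k' ∈ K.erase k) :
      G.Adj u k' := by
    obtain ⟨hk'k, hk'⟩ := mem_erase.1 hk'
    exact adj_of_notMem_nonNeighborsIn hk' (by simpa [hu])
  have notMem {u} (hu : G.nonNeighborsIn K u = {k}) : u ∉ K.erase k :=
    fun h => G.irrefl (adj_of_mem hu h)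
  have hclique : G.IsClique (insert v (insert w (K.erase k)) : Finset V) := by
    simp only [coe_insert, isClique_insert, mem_coe]
    refine ⟨⟨hK.isClique.subset (by simp), fun k' hk' _ => adj_of_mem hw hk'⟩, ?_⟩
    rintro k' (rfl | hk') -
    exacts [hvw, adj_of_mem hv hk']
  have := hclique.card_le_cliqueNum
  rw [card_insert_of_notMem (by simp [hvw.ne, notMem hv]), card_insert_of_notMem (notMem hw),
    card_erase_of_mem hk, hK.card_eq] at this
  have : 0 < G.cliqueNum := hK.card_eq ▸ card_pos.2 ⟨k, hk⟩
  omega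

theorem subsingleton_nonNeighborsIn_inter (h : IndFree graph2K2 G)
    (hK : G.IsClique (K : Set V)) (hvw : G.Adj v w) :
    ((G.nonNeighborsIn K v : Set V) ∩ G.nonNeighborsIn K w).Subsingleton := by
  intro k hk k' hk'
  simp only [Set.mem_inter_iff, mem_coe, mem_nonNeighborsIn] at hk hk'
  by_contra hne
  exact h.false_of_induced_2K2 hvw (hK hk.1.1 hk'.1.1 hne) hk.1.2 hk'.1.2 hk.2.2 hk'.2.2

theorem nonNeighborsIn_subset_or_subset (h : IndFree graphC4 G) (hK : G.IsClique (K : Set V))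
    (hv : v ∉ K) (hw : w ∉ K) (hvw : G.Adj v w) :
    G.nonNeighborsIn K v ⊆ G.nonNeighborsIn K w ∨
      G.nonNeighborsIn K w ⊆ G.nonNeighborsIn K v := by
  by_contra! hnot
  obtain ⟨a, ha, haw⟩ := not_subset.1 hnot.1
  obtain ⟨b, hb, hbv⟩ := not_subset.1 hnot.2
  obtain ⟨haK, hva⟩ := mem_nonNeighborsIn.1 ha
  obtain ⟨hbK, hwb⟩ := mem_nonNeighborsIn.1 hb
  have hab : a ≠ b := fun hab => haw (hab ▸ hb)
  refine indFree_graphC4_iff.1 h v w a b ⟨hvw, adj_of_notMem_nonNeighborsIn haK haw,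
    hK haK hbK hab, (adj_of_notMem_nonNeighborsIn hbK hbv).symm, hva, hwb, ?_, ?_⟩
  · rintro rfl; exact hv haK
  · rintro rfl; exact hw hbK

theorem IsNClique.isIndep_card_nonNeighborsIn_ne_one [Finite V] (hG : IsPseudoSplit G)
    (hK : G.IsNClique G.cliqueNum K) : IsIndep G {v | #(G.nonNeighborsIn K v) ≠ 1} := by
  intro v hv w hw _ hvw
  have hinter := subsingleton_nonNeighborsIn_inter hG.1 hK.isClique hvw
  rcases nonNeighborsIn_subset_or_subset hG.2 hK.isClique
    (hK.isClique.notMem_of_card_nonNeighborsIn_ne_one hv)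
    (hK.isClique.notMem_of_card_nonNeighborsIn_ne_one hw) hvw with hsub | hsub
  · obtain ⟨k, hk, k', hk', hne⟩ := one_lt_card.1 (hK.one_lt_card_nonNeighborsIn hv)
    exact hne (hinter ⟨hk, hsub hk⟩ ⟨hk', hsub hk'⟩)
  · obtain ⟨k, hk, k', hk', hne⟩ := one_lt_card.1 (hK.one_lt_card_nonNeighborsIn hw)
    exact hne (hinter ⟨hsub hk, hk⟩ ⟨hsub hk', hk'⟩)

theorem IsNClique.colorable_induce_card_nonNeighborsIn_eq_one [Finite V]
    (hK : G.IsNClique G.cliqueNum K) :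
    (G.induce {v | #(G.nonNeighborsIn K v) = 1}).Colorable G.cliqueNum := by
  have partner (v : {v | #(G.nonNeighborsIn K v) = 1}) :
      ∃ k, G.nonNeighborsIn K v = {k} := card_eq_one.1 v.2
  have partner_mem (v) : (partner v).choose ∈ K :=
    (mem_nonNeighborsIn.1 ((partner v).choose_spec ▸ mem_singleton_self _)).1
  let c : (G.induce {v | #(G.nonNeighborsIn K v) = 1}).Coloring K :=
    Coloring.mk (fun v => ⟨(partner v).choose, partner_mem v⟩) fun {v w} hvw heq => by
      have hw := (partner w).choose_spec
      rw [← Subtype.mk.inj heq] at hw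
      exact hK.not_adj_of_nonNeighborsIn_eq_singleton (partner v).choose_spec hw hvw
  simpa [hK.card_eq] using c.colorable

theorem IsPseudoSplit.colorable_cliqueNum_add_one [Finite V] (hG : IsPseudoSplit G) :
    G.Colorable (G.cliqueNum + 1) := by
  obtain ⟨K, hK⟩ := G.exists_isNClique_cliqueNum
  have := hK.colorable_induce_card_nonNeighborsIn_eq_one.induce_union
    (colorable_induce_one_of_isIndep (hK.isIndep_card_nonNeighborsIn_ne_one hG))
  rw [← Set.compl_ofPred, Set.union_compl_self] at this
  exact colorable_of_induce_univ this

variable {a b c d : V}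

theorem IsInducedC4.disjoint_commonNeighbors (hW : IndFree graphWheel G)
    (hC : G.IsInducedC4 a b c d) : Disjoint (G.commonNeighbors b d) (G.commonNeighbors a c) := by
  refine Set.disjoint_left.2 fun v hbd hac => ?_
  rw [mem_commonNeighbors] at hbd hac
  exact hW.false_of_isInducedC4_hub hC hac.1.symm hbd.1.symm hac.2.symm hbd.2.symm

theorem IsInducedC4.forall_not_adj_or_forall_not_adj (hW : IndFree graphWheel G)
    (hC : G.IsInducedC4 a b c d) {Q : Set V} (hQ : G.IsClique Q)
    (hQX : Q ⊆ G.commonNeighbors b d) : (∀ x ∈ Q, ¬G.Adj x a) ∨ ∀ x ∈ Q, ¬G.Adj x c := by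
  by_contra! ⟨⟨x, hx, hxa⟩, ⟨x', hx', hx'c⟩⟩
  obtain ⟨hbx, hdx⟩ := G.mem_commonNeighbors.1 (hQX hx)
  obtain ⟨hbx', hdx'⟩ := G.mem_commonNeighbors.1 (hQX hx')
  have hub {e} (hea : G.Adj e a) (hec : G.Adj e c) (heb : G.Adj b e) (hed : G.Adj d e) : False :=
    hW.false_of_isInducedC4_hub hC hea heb.symm hec hed.symm
  rcases eq_or_ne x x' with rfl | hxx'
  · exact hub hxa hx'c hbx hdx
  · have nx'a : ¬G.Adj x' a := fun hx'a => hub hx'a hx'c hbx' hdx'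
    -- `x' b a d` is an induced `C₄` with hub `x`
    refine hW.false_of_isInducedC4_hub ⟨hbx'.symm, hC.adj_ab.symm, hC.adj_da.symm, hdx', nx'a,
      hC.not_adj_bd, ?_, hC.ne_bd⟩ (hQ hx hx' hxx') hbx.symm hxa hdx.symm
    rintro rfl
    exact hC.not_adj_ac hx'c

theorem IsInducedC4.adj_of_not_adj (h2K2 : IndFree graph2K2 G) (hW : IndFree graphWheel G)
    (hC : G.IsInducedC4 a b c d) {Q : Set V} (hQ : G.IsClique Q)
    (hQX : Q ⊆ G.commonNeighbors b d) {x x' y : V} (hx : x ∈ Q) (hx' : x' ∈ Q) (hxx' : x ≠ x')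
    (hy : y ∈ G.commonNeighbors a c) (hxy : ¬G.Adj x y) : G.Adj x' y := by
  by_contra hx'y
  rw [mem_commonNeighbors] at hy
  rcases hC.forall_not_adj_or_forall_not_adj hW hQ hQX with hQa | hQc
  · exact h2K2.false_of_induced_2K2 (hQ hx hx' hxx') hy.1.symm hxy (hQa x hx) hx'y (hQa x' hx')
  · exact h2K2.false_of_induced_2K2 (hQ hx hx' hxx') hy.2.symm hxy (hQc x hx) hx'y (hQc x' hx')

-- Two non-edges `x₀y₀`, `xy` with `x ≠ x₀` and a third vertex `x₃` of `Q` would give the induced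
-- `C₄` `x₀ y y₀ x` with hub `x₃`.
theorem IsInducedC4.exists_forall_adj (h2K2 : IndFree graph2K2 G) (hW : IndFree graphWheel G)
    (hC : G.IsInducedC4 a b c d) {Q R : Finset V} (hQ : G.IsClique (Q : Set V))
    (hQX : (Q : Set V) ⊆ G.commonNeighbors b d) (hR : G.IsClique (R : Set V))
    (hRY : (R : Set V) ⊆ G.commonNeighbors a c) (hQcard : 2 < #Q) :
    ∃ x₀, ∀ x ∈ Q, x ≠ x₀ → ∀ y ∈ R, G.Adj x y := by
  classical
  by_contra! hnot
  obtain ⟨x₀, hx₀, -, y₀, hy₀, hn₀⟩ := hnot a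
  obtain ⟨x, hx, hxx₀, y, hy, hn⟩ := hnot x₀
  have adj_of_not_adj_left {x x' y} (hx : x ∈ Q) (hx' : x' ∈ Q) (hxx' : x ≠ x') (hy : y ∈ R)
      (hxy : ¬G.Adj x y) : G.Adj x' y :=
    hC.adj_of_not_adj h2K2 hW hQ hQX hx hx' hxx' (hRY hy) hxy
  have adj_of_not_adj_right {x y y'} (hx : x ∈ Q) (hy : y ∈ R) (hy' : y' ∈ R) (hyy' : y ≠ y')
      (hxy : ¬G.Adj x y) : G.Adj x y' :=
    (hC.rotate.adj_of_not_adj h2K2 hW hR (G.commonNeighbors_symm a c ▸ hRY) hy hy' hyy'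
      (hQX hx) (fun h => hxy h.symm)).symm
  have ne_of_mem {x y} (hx : x ∈ Q) (hy : y ∈ R) : x ≠ y := fun hxy =>
    Set.disjoint_left.1 (hC.disjoint_commonNeighbors hW) (hQX hx) (hxy ▸ hRY hy)
  have hyy₀ : y ≠ y₀ := by
    rintro rfl
    exact hn (adj_of_not_adj_left hx₀ hx hxx₀.symm hy hn₀)
  obtain ⟨x₃, hx₃, hx₃xx₀⟩ := exists_mem_notMem_of_card_lt_card (s := {x, x₀})
    (card_le_two.trans_lt hQcard)
  simp only [mem_insert, mem_singleton, not_or] at hx₃xx₀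
  exact hW.false_of_isInducedC4_hub
    ⟨adj_of_not_adj_right hx₀ hy₀ hy hyy₀.symm hn₀, hR hy hy₀ hyy₀,
      (adj_of_not_adj_right hx hy hy₀ hyy₀ hn).symm, hQ hx hx₀ hxx₀, hn₀, fun h => hn h.symm,
      ne_of_mem hx₀ hy₀, (ne_of_mem hx hy).symm⟩
    (hQ hx₃ hx₀ hx₃xx₀.2) (adj_of_not_adj_left hx hx₃ (Ne.symm hx₃xx₀.1) hy hn)
    (adj_of_not_adj_left hx₀ hx₃ (Ne.symm hx₃xx₀.2) hy₀ hn₀) (hQ hx₃ hx hx₃xx₀.1)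

theorem IsInducedC4.card_add_card_le_cliqueNum_add_one [Finite V] (h2K2 : IndFree graph2K2 G)
    (hW : IndFree graphWheel G) (hC : G.IsInducedC4 a b c d) {Q R : Finset V}
    (hQ : G.IsClique (Q : Set V)) (hQX : (Q : Set V) ⊆ G.commonNeighbors b d)
    (hR : G.IsClique (R : Set V)) (hRY : (R : Set V) ⊆ G.commonNeighbors a c) :
    #Q + #R ≤ G.cliqueNum + 1 := by
  classical
  rcases le_or_gt #Q 2 with hQcard | hQcard
  · have ha : ∀ y ∈ R, G.Adj a y := fun y hy => (G.mem_commonNeighbors.1 (hRY hy)).1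
    have hclique : G.IsClique (insert a R : Finset V) := by
      rw [coe_insert, isClique_insert]
      exact ⟨hR, fun y hy _ => ha y hy⟩
    have := hclique.card_le_cliqueNum
    rw [card_insert_of_notMem fun haR => G.irrefl (ha a haR)] at this
    omega
  · obtain ⟨x₀, hx₀⟩ := hC.exists_forall_adj h2K2 hW hQ hQX hR hRY hQcard
    exact card_add_card_le_cliqueNum_add_one_of_forall_adj hQ hR
      (disjoint_coe.1 ((hC.disjoint_commonNeighbors hW).mono hQX hRY)) x₀ hx₀

theorem IsInducedC4.colorable_cliqueNum_add_five [Finite V] (h2K2 : IndFree graph2K2 G)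
    (hW : IndFree graphWheel G) (hC : G.IsInducedC4 a b c d) :
    G.Colorable (G.cliqueNum + 5) := by
  have hX := (hW.isCluster_induce_commonNeighbors hC.ne_bd hC.not_adj_bd).colorable_cliqueNum
  have hY := (hW.isCluster_induce_commonNeighbors hC.ne_ac hC.not_adj_ac).colorable_cliqueNum
  have hXY : (G.induce (G.commonNeighbors b d)).cliqueNum +
      (G.induce (G.commonNeighbors a c)).cliqueNum ≤ G.cliqueNum + 1 := by
    obtain ⟨Q, hQX, hQ, hQω⟩ := G.exists_isClique_card_eq_cliqueNum_induce (G.commonNeighbors b d)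
    obtain ⟨R, hRY, hR, hRω⟩ := G.exists_isClique_card_eq_cliqueNum_induce (G.commonNeighbors a c)
    rw [← hQω, ← hRω]
    exact hC.card_add_card_le_cliqueNum_add_one h2K2 hW hQ hQX hR hRY
  have hZ {u v} (huv : G.Adj u v) :=
    colorable_induce_one_of_isIndep (h2K2.isIndep_compl_neighborSet_union huv)
  have hcover : G.commonNeighbors b d ∪ G.commonNeighbors a c ∪
      (G.neighborSet a ∪ G.neighborSet b)ᶜ ∪ (G.neighborSet b ∪ G.neighborSet c)ᶜ ∪
      (G.neighborSet c ∪ G.neighborSet d)ᶜ ∪ (G.neighborSet d ∪ G.neighborSet a)ᶜ = Set.univ := by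
    ext v
    simp only [Set.mem_union, Set.mem_compl_iff, mem_commonNeighbors, mem_neighborSet,
      Set.mem_univ, iff_true]
    tauto
  have := ((((hX.induce_union hY).induce_union (hZ hC.adj_ab)).induce_union
    (hZ hC.adj_bc)).induce_union (hZ hC.adj_cd)).induce_union (hZ hC.adj_da)
  rw [hcover] at this
  exact (colorable_of_induce_univ this).mono (by omega)

end SimpleGraph

/-- Every `(2K₂, K₁ + C₄)`-free graph `G` satisfies `χ(G) ≤ ω(G) + 5`. -/
theorem stmt3 {V : Type*} [Fintype V] (G : SimpleGraph V)
    (h1 : IndFree graph2K2 G) (h2 : IndFree graphWheel G) :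
    G.chromaticNumber ≤ ((G.cliqueNum + 5 : ℕ) : ℕ∞) := by
  refine Colorable.chromaticNumber_le ?_
  by_cases hC4 : IndFree graphC4 G
  · exact (IsPseudoSplit.colorable_cliqueNum_add_one ⟨h1, hC4⟩).mono (by omega)
  · obtain ⟨a, b, c, d, hC⟩ : ∃ a b c d, G.IsInducedC4 a b c d := by
      simpa [indFree_graphC4_iff] using hC4
    exact hC.colorable_cliqueNum_add_five h1 h2
end

section
/- Let G be a connected 2K2-free graph containing an induced diamond D with vertex set L0 = {v1, v2, v3, v4} and edge set {v1v2, v2v3, v3v4, v4v1, v2v4}. For i ∈ {1,2,3} let Xi be the set of vertices outside L0 whose neighborhood in L0 is exactly {vi}; let Y1 be those with neighborhood in L0 exactly {v1, v2}, Y2 those with neighborhood exactly {v2, v3}, Z1 those with neighborhood exactly {v1, v3}, Z2 those with neighborhood exactly {v1, v2, v3}, and let L2 be the set of vertices outside L0 with no neighbor in L0. Then: (1) V(G) = N(v4) ∪ {v4} ∪ X1 ∪ X2 ∪ X3 ∪ Y1 ∪ Y2 ∪ Z1 ∪ Z2 ∪ L2; (2) X1 = ∅ or X3 = ∅; (3)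 X1 ∪ X2 ∪ Y1, Y2, Z1 and L2 are each independent sets; (4) there are no edges between X1 ∪ X2 ∪ X3 ∪ Y1 ∪ Y2 ∪ Z1 and L2. -/
open SimpleGraph

/-! Every claim comes from one observation: in a `2K₂`-free graph, two vertices that both miss
both ends of an edge are nonadjacent. Vertices of `X₁ ∪ X₂ ∪ Y₁`, `Y₂`, `Z₁`, `L₂` all miss the
edge `v₃v₄`, `v₁v₄`, `v₂v₄`, `v₁v₄` respectively, and a vertex of `X₁ ∪ ⋯ ∪ Z₁` misses `v₄` and one
of `v₁, v₂, v₃`, which `L₂` misses as well. For `x ∈ X₁`, `y ∈ X₃`: if `x ~ y` then `xy` is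
separated from `v₂v₄`, and otherwise `xv₁` is separated from `yv₃`. -/

namespace IndFree

variable {V : Type*} {G : SimpleGraph V}

theorem false_of_separated_edges (h : IndFree graph2K2 G) {a b c d : V}
    (hab : G.Adj a b) (hcd : G.Adj c d)
    (hac : ¬G.Adj a c) (had : ¬G.Adj a d) (hbc : ¬G.Adj b c) (hbd : ¬G.Adj b d) : False := by
  have hac' : a ≠ c := by rintro rfl; exact had hcd
  have had' : a ≠ d := by rintro rfl; exact hac hcd.symm
  have hbc' : b ≠ c := by rintro rfl; exact hbd hcd
  have hbd' : b ≠ d := by rintro rfl; exact hbc hcd.symm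
  refine h.false ⟨⟨![a, b, c, d], ?_⟩, ?_⟩
  · intro i j hij
    fin_cases i <;> fin_cases j <;> simp_all [hab.ne, hcd.ne, hab.ne.symm, hcd.ne.symm]
  · intro i j
    change G.Adj (![a, b, c, d] i) (![a, b, c, d] j) ↔ graph2K2.Adj i j
    fin_cases i <;> fin_cases j <;>
      simp [graph2K2, hab, hcd, hab.symm, hcd.symm, hac, had, hbc, hbd, G.adj_comm c a,
        G.adj_comm c b, G.adj_comm d a, G.adj_comm d b]

theorem not_adj_of_not_adj_edge (h : IndFree graph2K2 G) {c d x y : V} (hcd : G.Adj c d)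
    (hxc : ¬G.Adj x c) (hxd : ¬G.Adj x d) (hyc : ¬G.Adj y c) (hyd : ¬G.Adj y d) :
    ¬G.Adj x y :=
  fun hxy => h.false_of_separated_edges hxy hcd hxc hxd hyc hyd

theorem isIndep_of_not_adj_edge (h : IndFree graph2K2 G) {c d : V} {s : Set V}
    (hcd : G.Adj c d) (hs : ∀ x ∈ s, ¬G.Adj x c ∧ ¬G.Adj x d) : IsIndep G s :=
  fun x hx y hy _ => h.not_adj_of_not_adj_edge hcd (hs x hx).1 (hs x hx).2 (hs y hy).1 (hs y hy).2

end IndFree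

theorem stmt5_general {V : Type*} (G : SimpleGraph V)
    (h2k2 : IndFree graph2K2 G)
    (v1 v2 v3 v4 : V)
    (h34 : G.Adj v3 v4)
    (h14 : G.Adj v1 v4) (h24 : G.Adj v2 v4) (h13 : ¬ G.Adj v1 v3)
    (L0 X1 X2 X3 Y1 Y2 Z1 Z2 L2 : Set V)
    (hL0 : L0 = {v1, v2, v3, v4})
    (hX1 : X1 = {x | x ∉ L0 ∧ G.Adj x v1 ∧ ¬G.Adj x v2 ∧ ¬G.Adj x v3 ∧ ¬G.Adj x v4})
    (hX2 : X2 = {x | x ∉ L0 ∧ ¬G.Adj x v1 ∧ G.Adj x v2 ∧ ¬G.Adj x v3 ∧ ¬G.Adj x v4})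
    (hX3 : X3 = {x | x ∉ L0 ∧ ¬G.Adj x v1 ∧ ¬G.Adj x v2 ∧ G.Adj x v3 ∧ ¬G.Adj x v4})
    (hY1 : Y1 = {x | x ∉ L0 ∧ G.Adj x v1 ∧ G.Adj x v2 ∧ ¬G.Adj x v3 ∧ ¬G.Adj x v4})
    (hY2 : Y2 = {x | x ∉ L0 ∧ ¬G.Adj x v1 ∧ G.Adj x v2 ∧ G.Adj x v3 ∧ ¬G.Adj x v4})
    (hZ1 : Z1 = {x | x ∉ L0 ∧ G.Adj x v1 ∧ ¬G.Adj x v2 ∧ G.Adj x v3 ∧ ¬G.Adj x v4})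
    (hZ2 : Z2 = {x | x ∉ L0 ∧ G.Adj x v1 ∧ G.Adj x v2 ∧ G.Adj x v3 ∧ ¬G.Adj x v4})
    (hL2 : L2 = {x | x ∉ L0 ∧ ¬G.Adj x v1 ∧ ¬G.Adj x v2 ∧ ¬G.Adj x v3 ∧ ¬G.Adj x v4}) :
    ((Set.univ : Set V) =
        G.neighborSet v4 ∪ {v4} ∪ X1 ∪ X2 ∪ X3 ∪ Y1 ∪ Y2 ∪ Z1 ∪ Z2 ∪ L2) ∧
    (X1 = ∅ ∨ X3 = ∅) ∧
    IsIndep G (X1 ∪ X2 ∪ Y1) ∧ IsIndep G Y2 ∧ IsIndep G Z1 ∧ IsIndep G L2 ∧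
    (∀ x ∈ X1 ∪ X2 ∪ X3 ∪ Y1 ∪ Y2 ∪ Z1, ∀ y ∈ L2, ¬ G.Adj x y) := by
  subst hL0 hX1 hX2 hX3 hY1 hY2 hZ1 hZ2 hL2
  refine ⟨?_, ?_, ?_, ?_, ?_, ?_, ?_⟩
  · refine (Set.eq_univ_of_forall fun x => ?_).symm
    by_cases hx4 : G.Adj v4 x
    · simp [hx4]
    by_cases hx : x = v4
    · simp [hx]
    have hx1 : x ≠ v1 := by rintro rfl; exact hx4 h14.symm
    have hx2 : x ≠ v2 := by rintro rfl; exact hx4 h24.symm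
    have hx3 : x ≠ v3 := by rintro rfl; exact hx4 h34.symm
    have hx4' : ¬G.Adj x v4 := fun h => hx4 h.symm
    by_cases h1 : G.Adj x v1 <;> by_cases h2 : G.Adj x v2 <;> by_cases h3 : G.Adj x v3 <;>
      simp [hx, hx1, hx2, hx3, hx4', h1, h2, h3]
  · refine (Set.eq_empty_or_nonempty _).imp_right fun ⟨x, _, hx1, hx2, hx3, hx4⟩ => ?_
    refine Set.eq_empty_of_forall_notMem fun y ⟨_, hy1, hy2, hy3, hy4⟩ => ?_
    by_cases hxy : G.Adj x y
    · exact h2k2.false_of_separated_edges hxy h24 hx2 hx4 hy2 hy4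
    · exact h2k2.false_of_separated_edges hx1 hy3 hxy hx3 (fun h => hy1 h.symm) h13
  · refine h2k2.isIndep_of_not_adj_edge h34 ?_
    rintro x ((⟨-, -, -, h3, h4⟩ | ⟨-, -, -, h3, h4⟩) | ⟨-, -, -, h3, h4⟩) <;> exact ⟨h3, h4⟩
  · exact h2k2.isIndep_of_not_adj_edge h14 fun x ⟨_, h1, _, _, h4⟩ => ⟨h1, h4⟩
  · exact h2k2.isIndep_of_not_adj_edge h24 fun x ⟨_, _, h2, _, h4⟩ => ⟨h2, h4⟩
  · exact h2k2.isIndep_of_not_adj_edge h14 fun x ⟨_, h1, _, _, h4⟩ => ⟨h1, h4⟩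
  · rintro x hx y ⟨-, hy1, hy2, hy3, hy4⟩
    obtain ⟨w, hw4, hxw, hyw, hx4⟩ :
        ∃ w, G.Adj w v4 ∧ ¬G.Adj x w ∧ ¬G.Adj y w ∧ ¬G.Adj x v4 := by
      rcases hx with (((((⟨-, -, h, -, h4⟩ | ⟨-, h, -, -, h4⟩) | ⟨-, h, -, -, h4⟩) |
          ⟨-, -, -, h, h4⟩) | ⟨-, h, -, -, h4⟩) | ⟨-, -, h, -, h4⟩)
      exacts [⟨v2, h24, h, hy2, h4⟩, ⟨v1, h14, h, hy1, h4⟩, ⟨v1, h14, h, hy1, h4⟩,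
        ⟨v3, h34, h, hy3, h4⟩, ⟨v1, h14, h, hy1, h4⟩, ⟨v2, h24, h, hy2, h4⟩]
    exact h2k2.not_adj_of_not_adj_edge hw4 hxw hx4 hyw hy4

/-- Structure around an induced diamond in a connected `2K₂`-free graph. -/
theorem stmt5 {V : Type*} [Fintype V] (G : SimpleGraph V)
    (hconn : G.Connected) (h2k2 : IndFree graph2K2 G)
    (v1 v2 v3 v4 : V) (hd : [v1, v2, v3, v4].Nodup)
    (h12 : G.Adj v1 v2) (h23 : G.Adj v2 v3) (h34 : G.Adj v3 v4)
    (h14 : G.Adj v1 v4) (h24 : G.Adj v2 v4) (h13 : ¬ G.Adj v1 v3)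
    (L0 X1 X2 X3 Y1 Y2 Z1 Z2 L2 : Set V)
    (hL0 : L0 = {v1, v2, v3, v4})
    (hX1 : X1 = {x | x ∉ L0 ∧ G.Adj x v1 ∧ ¬G.Adj x v2 ∧ ¬G.Adj x v3 ∧ ¬G.Adj x v4})
    (hX2 : X2 = {x | x ∉ L0 ∧ ¬G.Adj x v1 ∧ G.Adj x v2 ∧ ¬G.Adj x v3 ∧ ¬G.Adj x v4})
    (hX3 : X3 = {x | x ∉ L0 ∧ ¬G.Adj x v1 ∧ ¬G.Adj x v2 ∧ G.Adj x v3 ∧ ¬G.Adj x v4})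
    (hY1 : Y1 = {x | x ∉ L0 ∧ G.Adj x v1 ∧ G.Adj x v2 ∧ ¬G.Adj x v3 ∧ ¬G.Adj x v4})
    (hY2 : Y2 = {x | x ∉ L0 ∧ ¬G.Adj x v1 ∧ G.Adj x v2 ∧ G.Adj x v3 ∧ ¬G.Adj x v4})
    (hZ1 : Z1 = {x | x ∉ L0 ∧ G.Adj x v1 ∧ ¬G.Adj x v2 ∧ G.Adj x v3 ∧ ¬G.Adj x v4})
    (hZ2 : Z2 = {x | x ∉ L0 ∧ G.Adj x v1 ∧ G.Adj x v2 ∧ G.Adj x v3 ∧ ¬G.Adj x v4})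
    (hL2 : L2 = {x | x ∉ L0 ∧ ¬G.Adj x v1 ∧ ¬G.Adj x v2 ∧ ¬G.Adj x v3 ∧ ¬G.Adj x v4}) :
    ((Set.univ : Set V) =
        G.neighborSet v4 ∪ {v4} ∪ X1 ∪ X2 ∪ X3 ∪ Y1 ∪ Y2 ∪ Z1 ∪ Z2 ∪ L2) ∧
    (X1 = ∅ ∨ X3 = ∅) ∧
    IsIndep G (X1 ∪ X2 ∪ Y1) ∧ IsIndep G Y2 ∧ IsIndep G Z1 ∧ IsIndep G L2 ∧
    (∀ x ∈ X1 ∪ X2 ∪ X3 ∪ Y1 ∪ Y2 ∪ Z1, ∀ y ∈ L2, ¬ G.Adj x y) :=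
  stmt5_general G h2k2 v1 v2 v3 v4 h34 h14 h24 h13 L0 X1 X2 X3 Y1 Y2 Z1 Z2 L2 hL0 hX1 hX2 hX3 hY1
    hY2 hZ1 hZ2 hL2
end

section
/- Let G be a (2K2, HVN)-free graph. Then χ(G) ≤ ω(G) + 3. -/
open SimpleGraph

/-!
Fix a maximum clique `K` and let `M(v) = nonAdjIn G K v` be the set of vertices of `K` not
adjacent to `v`; thus `M(v) = {v}` for `v ∈ K`, and `M(v) ≠ ∅` for every `v` by maximality.
Two adjacent vertices cannot have the same singleton `M = {x}`, since together with `K \ {x}`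
they would form a larger clique, and they cannot have two common non-neighbours in `K`, since
these would induce a `2K₂` with them. Colouring `v` by `M(v)` when it is a singleton and by a
2-subset of `M(v)` otherwise gives Wagon's bound `χ ≤ C(ω + 1, 2)`, which is at most `ω + 3` for
`ω ≤ 3`. For `ω ≥ 4`, `HVN`-freeness forces every `v` with `|M(v)| ≥ 2` to have at most one
neighbour in `K`; two such vertices then share `ω - 2 ≥ 2` non-neighbours in `K`, so they form
one independent set and `ω + 1` colours suffice.
-/

section

open Finset

variable {V : Type*} {G : SimpleGraph V}

lemma SimpleGraph.colorable_of_forall_mem {α : Type*} (s : Finset α) (f : V → α)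
    (hf : ∀ v, f v ∈ s) (hadj : ∀ ⦃v w⦄, G.Adj v w → f v ≠ f w) : G.Colorable #s := by
  simpa using (Coloring.mk (fun v => (⟨f v, hf v⟩ : s))
    fun hvw heq => hadj hvw (congrArg Subtype.val heq)).colorable

lemma IndFree.false_of_graph2K2 (h : IndFree graph2K2 G) {u v x y : V}
    (huv : G.Adj u v) (hxy : G.Adj x y)
    (hux : ¬G.Adj u x) (huy : ¬G.Adj u y) (hvx : ¬G.Adj v x) (hvy : ¬G.Adj v y) : False := by
  have := huv.ne; have := hxy.ne
  have : u ≠ x := by rintro rfl; exact hvx huv.symm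
  have : u ≠ y := by rintro rfl; exact hvy huv.symm
  have : v ≠ x := by rintro rfl; exact hux huv
  have : v ≠ y := by rintro rfl; exact huy huv
  refine h.false ⟨⟨![u, v, x, y], ?_⟩, ?_⟩
  · intro i j hij
    fin_cases i <;> fin_cases j <;> simp_all
  · intro i j
    fin_cases i <;> fin_cases j <;> simp [graph2K2] <;> first | exact fun h => h.ne rfl | tauto

lemma IndFree.false_of_graphHVN (h : IndFree graphHVN G) {a b c d v : V}
    (hab : G.Adj a b) (hac : G.Adj a c) (had : G.Adj a d)
    (hbc : G.Adj b c) (hbd : G.Adj b d) (hcd : G.Adj c d)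
    (hva : G.Adj v a) (hvb : G.Adj v b) (hvc : ¬G.Adj v c) (hvd : ¬G.Adj v d) : False := by
  have := hab.ne; have := hac.ne; have := had.ne; have := hbc.ne; have := hbd.ne; have := hcd.ne
  have := hva.ne; have := hvb.ne
  have : v ≠ c := by rintro rfl; exact hvd hcd
  have : v ≠ d := by rintro rfl; exact hvc hcd.symm
  refine h.false ⟨⟨![a, b, c, d, v], ?_⟩, ?_⟩
  · intro i j hij
    fin_cases i <;> fin_cases j <;> simp_all
  · intro i j
    fin_cases i <;> fin_cases j <;> simp [graphHVN] <;> first | exact fun h => h.ne rfl | tauto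

def nonAdjIn (G : SimpleGraph V) [DecidableRel G.Adj] (K : Finset V) (v : V) : Finset V :=
  {y ∈ K | ¬G.Adj v y}

section nonAdjIn

variable [DecidableRel G.Adj] {K : Finset V}

lemma nonAdjIn_subset (v : V) : nonAdjIn G K v ⊆ K := filter_subset _ K

lemma mem_nonAdjIn_self {v : V} (hv : v ∈ K) : v ∈ nonAdjIn G K v := by
  simp [nonAdjIn, hv]

lemma adj_of_notMem_nonAdjIn {v y : V} (hy : y ∈ K) (hvy : y ∉ nonAdjIn G K v) : G.Adj v y := by
  simpa [nonAdjIn, hy] using hvy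

lemma IndFree.card_nonAdjIn_le_one_or (h : IndFree graphHVN G) (hK : G.IsClique K) (v : V) :
    #(nonAdjIn G K v) ≤ 1 ∨ #K ≤ #(nonAdjIn G K v) + 1 := by
  by_contra! hcard
  have hnbrs : 1 < #(K.filter (G.Adj v)) := by
    have := card_filter_add_card_filter_not (s := K) (G.Adj v)
    rw [nonAdjIn] at hcard
    omega
  obtain ⟨a, ha, b, hb, hab⟩ := one_lt_card.mp hnbrs
  obtain ⟨c, hc, d, hd, hcd⟩ := one_lt_card.mp hcard.1
  simp only [nonAdjIn, mem_filter] at ha hb hc hd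
  have hac : a ≠ c := fun h => hc.2 (h ▸ ha.2)
  have had : a ≠ d := fun h => hd.2 (h ▸ ha.2)
  have hbc : b ≠ c := fun h => hc.2 (h ▸ hb.2)
  have hbd : b ≠ d := fun h => hd.2 (h ▸ hb.2)
  exact h.false_of_graphHVN (hK ha.1 hb.1 hab) (hK ha.1 hc.1 hac) (hK ha.1 hd.1 had)
    (hK hb.1 hc.1 hbc) (hK hb.1 hd.1 hbd) (hK hc.1 hd.1 hcd) ha.2 hb.2 hc.2 hd.2

variable [DecidableEq V]

lemma IndFree.card_inter_nonAdjIn_le_one (h : IndFree graph2K2 G) (hK : G.IsClique K) {v w : V}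
    (hvw : G.Adj v w) : #(nonAdjIn G K v ∩ nonAdjIn G K w) ≤ 1 := by
  refine card_le_one.mpr fun x hx y hy => by_contra fun hxy => ?_
  simp only [nonAdjIn, mem_inter, mem_filter] at hx hy
  exact h.false_of_graph2K2 hvw (hK hx.1.1 hy.1.1 hxy) hx.1.2 hy.1.2 hx.2.2 hy.2.2

variable [Fintype V]

lemma nonAdjIn_nonempty (hK : G.IsNClique G.cliqueNum K) (v : V) : (nonAdjIn G K v).Nonempty := by
  by_contra hempty
  have hadj {y} (hy : y ∈ K) : G.Adj v y :=
    adj_of_notMem_nonAdjIn hy fun hy' => hempty ⟨y, hy'⟩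
  have hvK : v ∉ K := fun hv => (hadj hv).ne rfl
  have hclique : G.IsClique (insert v K : Finset V) := by
    rw [coe_insert]
    exact hK.isClique.insert fun y hy _ => hadj hy
  have := hclique.card_le_cliqueNum
  rw [card_insert_of_notMem hvK, hK.card_eq] at this
  omega

lemma not_adj_of_nonAdjIn_eq_singleton (hK : G.IsNClique G.cliqueNum K) {v w x : V}
    (hv : nonAdjIn G K v = {x}) (hw : nonAdjIn G K w = {x}) : ¬G.Adj v w := by
  intro hvw
  have hxK : x ∈ K := nonAdjIn_subset v (hv ▸ mem_singleton_self x)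
  have hadj {u y} (hu : nonAdjIn G K u = {x}) (hy : y ∈ K.erase x) : G.Adj u y :=
    adj_of_notMem_nonAdjIn (mem_of_mem_erase hy) (hu ▸ by simpa using ne_of_mem_erase hy)
  have hnotMem {u} (hu : nonAdjIn G K u = {x}) : u ∉ K.erase x := fun h =>
    ne_of_mem_erase h (mem_singleton.mp (hu ▸ mem_nonAdjIn_self (mem_of_mem_erase h)))
  have hclique : G.IsClique (insert v (insert w (K.erase x)) : Finset V) := by
    rw [coe_insert, coe_insert]
    refine (((hK.isClique.subset (coe_subset.mpr (erase_subset x K))).insert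
      fun y hy _ => hadj hw hy).insert ?_)
    rintro y (rfl | hy) -
    exacts [hvw, hadj hv hy]
  have := hclique.card_le_cliqueNum
  rw [card_insert_of_notMem (by simp [hvw.ne, hnotMem hv]), card_insert_of_notMem (hnotMem hw),
    card_erase_of_mem hxK, hK.card_eq] at this
  have : 0 < G.cliqueNum := hK.card_eq ▸ card_pos.mpr ⟨x, hxK⟩
  omega

end nonAdjIn

variable [Fintype V]

theorem IndFree.colorable_cliqueNum_succ_choose_two (h : IndFree graph2K2 G) :
    G.Colorable ((G.cliqueNum + 1).choose 2) := by
  classical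
  obtain ⟨K, hK⟩ := G.exists_isNClique_cliqueNum
  have hsubset (v : V) : ∃ S ⊆ nonAdjIn G K v, #S = min 2 #(nonAdjIn G K v) :=
    exists_subset_card_eq (min_le_right _ _)
  choose f hfM hfcard using hsubset
  have hf_pos (v : V) : 0 < #(f v) := by
    have := (nonAdjIn_nonempty hK v).card_pos
    have := hfcard v
    omega
  have hf_eq (v : V) (hv : #(f v) < 2) : f v = nonAdjIn G K v :=
    eq_of_subset_of_card_le (hfM v) (by have := hfcard v; omega)
  refine (colorable_of_forall_mem (powersetCard 1 K ∪ powersetCard 2 K) f ?_ ?_).mono ?_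
  · intro v
    have := hf_pos v
    have := hfcard v
    simp only [mem_union, mem_powersetCard, (hfM v).trans (nonAdjIn_subset v), true_and]
    omega
  · intro v w hvw hfvw
    by_cases hv : #(f v) < 2
    · obtain ⟨x, hx⟩ := card_eq_one.mp (show #(f v) = 1 by have := hf_pos v; omega)
      exact not_adj_of_nonAdjIn_eq_singleton hK (hf_eq v hv ▸ hx)
        (hf_eq w (hfvw ▸ hv) ▸ hfvw ▸ hx) hvw
    · have := card_le_card (subset_inter (hfM v) (hfvw ▸ hfM w))
      have := h.card_inter_nonAdjIn_le_one hK.isClique hvw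
      omega
  · calc #(powersetCard 1 K ∪ powersetCard 2 K)
        ≤ #(powersetCard 1 K) + #(powersetCard 2 K) := card_union_le _ _
      _ = (G.cliqueNum + 1).choose 2 := by
        rw [card_powersetCard, card_powersetCard, hK.card_eq, Nat.choose_succ_succ]

theorem IndFree.colorable_cliqueNum_add_one (h2K2 : IndFree graph2K2 G)
    (hHVN : IndFree graphHVN G) (hω : 4 ≤ G.cliqueNum) : G.Colorable (G.cliqueNum + 1) := by
  classical
  obtain ⟨K, hK⟩ := G.exists_isNClique_cliqueNum
  let f (v : V) : Finset V := if #(nonAdjIn G K v) = 1 then nonAdjIn G K v else ∅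
  refine (colorable_of_forall_mem (insert ∅ (powersetCard 1 K)) f ?_ ?_).mono ?_
  · intro v
    unfold f
    split_ifs with hv
    · exact mem_insert_of_mem (mem_powersetCard.mpr ⟨nonAdjIn_subset v, hv⟩)
    · exact mem_insert_self _ _
  · intro v w hvw hfvw
    have hv := (nonAdjIn_nonempty hK v).card_pos
    have hw := (nonAdjIn_nonempty hK w).card_pos
    simp only [f] at hfvw
    split_ifs at hfvw with hv1 hw1 hw1
    · obtain ⟨x, hx⟩ := card_eq_one.mp hv1
      exact not_adj_of_nonAdjIn_eq_singleton hK hx (hfvw ▸ hx) hvw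
    · simp [hfvw] at hv
    · simp [← hfvw] at hw
    · have := hHVN.card_nonAdjIn_le_one_or hK.isClique v
      have := hHVN.card_nonAdjIn_le_one_or hK.isClique w
      have := h2K2.card_inter_nonAdjIn_le_one hK.isClique hvw
      have := card_union_add_card_inter (nonAdjIn G K v) (nonAdjIn G K w)
      have : #(nonAdjIn G K v ∪ nonAdjIn G K w) ≤ #K :=
        card_le_card (union_subset (nonAdjIn_subset v) (nonAdjIn_subset w))
      rw [hK.card_eq] at *
      omega
  · calc #(insert ∅ (powersetCard 1 K)) ≤ #(powersetCard 1 K) + 1 := card_insert_le _ _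
      _ = G.cliqueNum + 1 := by rw [card_powersetCard, Nat.choose_one_right, hK.card_eq]

end

/-- Every `(2K₂, HVN)`-free graph `G` satisfies `χ(G) ≤ ω(G) + 3`. -/
theorem stmt7 {V : Type*} [Fintype V] (G : SimpleGraph V)
    (h1 : IndFree graph2K2 G) (h2 : IndFree graphHVN G) :
    G.chromaticNumber ≤ ((G.cliqueNum + 3 : ℕ) : ℕ∞) := by
  refine Colorable.chromaticNumber_le ?_
  by_cases hω : G.cliqueNum ≤ 3
  · have hchoose : ∀ n ≤ 3, (n + 1).choose 2 ≤ n + 3 := by decide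
    exact h1.colorable_cliqueNum_succ_choose_two.mono (hchoose _ hω)
  · exact (h1.colorable_cliqueNum_add_one h2 (by omega)).mono (by omega)
end
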